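/- For every χ ∈ (0,1): χ^{−1/2} · ∫_{1−χ}^1 ζ^{1/2} (ζ−1+χ)^{−1/4} (1−ζ)^{−1/4} dζ = (2·Γ(3/4)²/√π)·₂F₁(−1/2, 3/4; 3/2; χ). -/

import Mathlib

/-- The Gauss hypergeometric series `₂F₁(a,b;c;z) = Σ_n (a)_n (b)_n / ((c)_n n!) · zⁿ`,
where `(a)_n` is the rising factorial (Pochhammer symbol). -/
noncomputable def hyp2F1 (a b c z : ℝ) : ℝ :=
  ∑' n : ℕ, ((ascPochhammer ℝ n).eval a * (ascPochhammer ℝ n).eval b /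
      ((ascPochhammer ℝ n).eval c * (n.factorial : ℝ))) * z ^ n

/-- `B(χ) := ∫_{1−χ}^1 ζ^{1/2} (ζ−1+χ)^{−1/4} (1−ζ)^{−1/4} dζ`. -/
noncomputable def Bint (χ : ℝ) : ℝ :=
  ∫ ζ in (1 - χ)..1, ζ ^ ((1/2) : ℝ) * (ζ - 1 + χ) ^ (-(1/4) : ℝ) * (1 - ζ) ^ (-(1/4) : ℝ)

/-!
The substitution `ζ = 1 - χ t` turns `χ^{-1/2} B(χ)` into Euler's integral
`∫₀¹ t^{b-1} (1-t)^{c-b-1} (1-χt)^{-a} dt` with `a = -1/2`, `b = 3/4`, `c = 3/2`.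
Expanding `(1-χt)^{-a}` in its binomial series and integrating term by term (the series is
dominated by `Σ |(a)_n/n!| |χ|ⁿ` times an integrable Beta weight), the `n`-th term is a Beta integral
`B(b+n, c-b) = Γ(b+n)Γ(c-b)/Γ(c+n)`, and `Γ(x+n) = (x)_n Γ(x)` turns the sum into
`Γ(b)Γ(c-b)/Γ(c) · ₂F₁(a,b;c;χ)`. Finally `Γ(3/2) = √π/2`.
-/

open Real Set MeasureTheory Polynomial
open scoped Nat

theorem Real.Gamma_add_nat_eq_ascPochhammer_mul {x : ℝ} (hx : ∀ k : ℕ, x ≠ -k) (n : ℕ) :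
    Gamma (x + n) = (ascPochhammer ℝ n).eval x * Gamma x := by
  induction n with
  | zero => simp
  | succ n ih =>
    have hxn : x + n ≠ 0 := fun h => hx n (eq_neg_of_add_eq_zero_left h)
    rw [Nat.cast_succ, ← add_assoc, Gamma_add_one hxn, ih, ascPochhammer_succ_eval]
    ring

theorem ascPochhammer_eval_div_factorial_eq_neg_one_pow_mul_choose (a : ℝ) (n : ℕ) :
    (ascPochhammer ℝ n).eval a / n ! = (-1) ^ n * Ring.choose (-a) n := by
  rw [Ring.choose_eq_smul, smul_eq_mul]
  simp only [descPochhammer_smeval_eq_ascPochhammer, ascPochhammer_smeval_cast,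
    ascPochhammer_smeval_eq_eval, ← descPochhammer_eval_eq_ascPochhammer]
  rw [← neg_neg a, ascPochhammer_eval_neg_eq_descPochhammer, neg_neg]
  ring

theorem hasSum_ascPochhammer_div_factorial_mul_pow {a y : ℝ} (hy : |y| < 1) :
    HasSum (fun n => (ascPochhammer ℝ n).eval a / n ! * y ^ n) ((1 - y) ^ (-a)) := by
  have h := (one_add_rpow_hasFPowerSeriesOnBall_zero (a := -a)).hasSum
    (y := -y) (by simpa [enorm_eq_nnnorm, ← NNReal.coe_lt_coe] using hy)
  have hterm (n : ℕ) : binomialSeries ℝ (-a) n (fun _ => -y)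
      = (ascPochhammer ℝ n).eval a / n ! * y ^ n := by
    simp [binomialSeries, ascPochhammer_eval_div_factorial_eq_neg_one_pow_mul_choose, neg_pow y]
    ring
  rw [zero_add, ← sub_eq_add_neg] at h
  simpa only [hterm] using h

theorem summable_abs_ascPochhammer_div_factorial_mul_pow (a : ℝ) {y : ℝ} (hy : |y| < 1) :
    Summable (fun n => |(ascPochhammer ℝ n).eval a / n ! * y ^ n|) := by
  have h := (binomialSeries ℝ (-a)).summable_norm_mul_pow (r := ‖y‖₊)
    (lt_of_lt_of_le (by simpa [← NNReal.coe_lt_coe] using hy) binomialSeries_radius_ge_one)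
  convert h using 2 with n
  simp [binomialSeries, ascPochhammer_eval_div_factorial_eq_neg_one_pow_mul_choose, abs_mul]

theorem Complex.ofReal_rpow_mul_one_sub_rpow {p q t : ℝ} (ht : t ∈ Icc (0 : ℝ) 1) :
    ((t ^ (p - 1) * (1 - t) ^ (q - 1) : ℝ) : ℂ)
      = (t : ℂ) ^ ((p : ℂ) - 1) * (1 - (t : ℂ)) ^ ((q : ℂ) - 1) := by
  push_cast
  rw [ofReal_cpow ht.1, ofReal_cpow (sub_nonneg.2 ht.2)]
  push_cast
  ring

theorem intervalIntegrable_rpow_mul_one_sub_rpow {p q : ℝ} (hp : 0 < p) (hq : 0 < q) :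
    IntervalIntegrable (fun t => t ^ (p - 1) * (1 - t) ^ (q - 1)) volume 0 1 := by
  refine (Complex.betaIntegral_convergent (u := p) (v := q) (by simpa) (by simpa)).norm.congr ?_
  intro t ht
  rw [uIoc_of_le zero_le_one] at ht
  have ht' : t ∈ Icc (0 : ℝ) 1 := Ioc_subset_Icc_self ht
  dsimp only
  rw [← Complex.ofReal_rpow_mul_one_sub_rpow ht', Complex.norm_real, Real.norm_of_nonneg]
  exact mul_nonneg (rpow_nonneg ht'.1 _) (rpow_nonneg (sub_nonneg.2 ht'.2) _)

theorem integral_rpow_mul_one_sub_rpow {p q : ℝ} (hp : 0 < p) (hq : 0 < q) :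
    ∫ t in (0 : ℝ)..1, t ^ (p - 1) * (1 - t) ^ (q - 1) = Gamma p * Gamma q / Gamma (p + q) := by
  have h := Complex.betaIntegral_eq_Gamma_mul_div p q (by simpa) (by simpa)
  rw [Complex.betaIntegral, ← intervalIntegral.integral_congr
    (fun t ht => Complex.ofReal_rpow_mul_one_sub_rpow (uIcc_of_le (zero_le_one' ℝ) ▸ ht)),
    intervalIntegral.integral_ofReal, ← Complex.ofReal_add, Complex.Gamma_ofReal,
    Complex.Gamma_ofReal, Complex.Gamma_ofReal] at h
  exact_mod_cast h

theorem integral_rpow_mul_one_sub_rpow_mul_pow {b c : ℝ} (hb : 0 < b) (hbc : b < c) (n : ℕ) :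
    ∫ t in (0 : ℝ)..1, t ^ (b - 1) * (1 - t) ^ (c - b - 1) * t ^ n
      = (ascPochhammer ℝ n).eval b / (ascPochhammer ℝ n).eval c
        * (Gamma b * Gamma (c - b) / Gamma c) := by
  have hne : ∀ x : ℝ, 0 < x → ∀ k : ℕ, x ≠ -k := fun x hx k => by
    have : (0 : ℝ) ≤ k := k.cast_nonneg
    linarith
  have hc : 0 < c := hb.trans hbc
  have hmoment : ∫ t in (0 : ℝ)..1, t ^ (b - 1) * (1 - t) ^ (c - b - 1) * t ^ n
      = ∫ t in (0 : ℝ)..1, t ^ (b + n - 1) * (1 - t) ^ (c - b - 1) := by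
    refine intervalIntegral.integral_congr_ae (Filter.Eventually.of_forall fun t ht => ?_)
    rw [uIoc_of_le zero_le_one] at ht
    rw [show b + n - 1 = b - 1 + n by ring, rpow_add_natCast ht.1.ne']
    ring
  rw [hmoment, integral_rpow_mul_one_sub_rpow (by positivity) (sub_pos.2 hbc),
    show b + n + (c - b) = c + n by ring, Gamma_add_nat_eq_ascPochhammer_mul (hne b hb),
    Gamma_add_nat_eq_ascPochhammer_mul (hne c hc)]
  have := ascPochhammer_pos n c hc
  field_simp

theorem hasSum_integral_mul_one_sub_mul_rpow {w : ℝ → ℝ} (hw : IntervalIntegrable w volume 0 1)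
    (a : ℝ) {z : ℝ} (hz : |z| < 1) :
    HasSum (fun n => (ascPochhammer ℝ n).eval a / n ! * z ^ n * ∫ t in (0 : ℝ)..1, w t * t ^ n)
      (∫ t in (0 : ℝ)..1, w t * (1 - z * t) ^ (-a)) := by
  set coef : ℕ → ℝ := fun n => (ascPochhammer ℝ n).eval a / n ! * z ^ n with hcoef
  simp_rw [← intervalIntegral.integral_const_mul]
  refine intervalIntegral.hasSum_integral_of_dominated_convergence
    (fun n t => |coef n| * ‖w t‖) (fun n => ?_) (fun n => ?_) ?_ ?_ ?_
  · exact ((hw.mul_continuousOn (continuous_pow n).continuousOn).const_mul _).def'.1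
  · refine Filter.Eventually.of_forall fun t ht => ?_
    rw [uIoc_of_le zero_le_one] at ht
    rw [norm_mul (coef n), norm_mul (w t), Real.norm_eq_abs (coef n), norm_pow,
      Real.norm_of_nonneg ht.1.le]
    exact mul_le_mul_of_nonneg_left (mul_le_of_le_one_right (norm_nonneg _)
      (pow_le_one₀ ht.1.le ht.2)) (abs_nonneg _)
  · exact Filter.Eventually.of_forall fun t _ =>
      (summable_abs_ascPochhammer_div_factorial_mul_pow a hz).mul_right _
  · simp_rw [tsum_mul_right]
    exact hw.norm.const_mul _
  · refine Filter.Eventually.of_forall fun t ht => ?_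
    rw [uIoc_of_le zero_le_one] at ht
    have hzt : |z * t| < 1 := by
      rw [abs_mul, abs_of_pos ht.1]
      exact lt_of_le_of_lt (mul_le_of_le_one_right (abs_nonneg z) ht.2) hz
    have h := (hasSum_ascPochhammer_div_factorial_mul_pow (a := a) hzt).mul_left (w t)
    have hfun : (fun n => w t * ((ascPochhammer ℝ n).eval a / n ! * (z * t) ^ n))
        = fun n => coef n * (w t * t ^ n) := by
      funext n
      rw [hcoef, mul_pow]
      ring
    rwa [hfun] at h

theorem integral_rpow_mul_one_sub_rpow_mul_one_sub_mul_rpow {a b c z : ℝ} (hb : 0 < b)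
    (hbc : b < c) (hz : |z| < 1) :
    ∫ t in (0 : ℝ)..1, t ^ (b - 1) * (1 - t) ^ (c - b - 1) * (1 - z * t) ^ (-a)
      = Gamma b * Gamma (c - b) / Gamma c * hyp2F1 a b c z := by
  have hterms := hasSum_integral_mul_one_sub_mul_rpow
    (w := fun t => t ^ (b - 1) * (1 - t) ^ (c - b - 1))
    (by simpa [sub_sub] using intervalIntegrable_rpow_mul_one_sub_rpow hb (sub_pos.2 hbc)) a hz
  rw [← hterms.tsum_eq, hyp2F1, ← tsum_mul_left]
  refine tsum_congr fun n => ?_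
  rw [integral_rpow_mul_one_sub_rpow_mul_pow hb hbc n]
  have := ascPochhammer_pos n c (hb.trans hbc)
  field_simp

theorem integral_rpow_mul_sub_one_add_rpow_mul_one_sub_rpow {x : ℝ} (hx : 0 < x) (α β γ : ℝ) :
    ∫ ζ in (1 - x)..1, ζ ^ γ * (ζ - 1 + x) ^ α * (1 - ζ) ^ β
      = x ^ (1 + α + β) * ∫ t in (0 : ℝ)..1, t ^ β * (1 - t) ^ α * (1 - x * t) ^ γ := by
  have hsub := intervalIntegral.integral_comp_sub_mul
    (fun ζ => ζ ^ γ * (ζ - 1 + x) ^ α * (1 - ζ) ^ β) (a := 0) (b := 1) hx.ne' 1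
  simp only [mul_zero, mul_one, sub_zero, smul_eq_mul] at hsub
  rw [eq_inv_mul_iff_mul_eq₀ hx.ne'] at hsub
  rw [← hsub, ← intervalIntegral.integral_const_mul, ← intervalIntegral.integral_const_mul]
  refine intervalIntegral.integral_congr fun t ht => ?_
  rw [uIcc_of_le zero_le_one] at ht
  rw [show 1 - x * t - 1 + x = x * (1 - t) by ring, show 1 - (1 - x * t) = x * t by ring,
    mul_rpow hx.le (sub_nonneg.2 ht.2), mul_rpow hx.le ht.1, add_assoc, rpow_add hx,
    rpow_add hx, rpow_one]
  ring

/-- For every χ ∈ (0,1),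
χ^{−1/2} · ∫_{1−χ}^1 ζ^{1/2} (ζ−1+χ)^{−1/4} (1−ζ)^{−1/4} dζ
  = (2·Γ(3/4)²/√π)·₂F₁(−1/2, 3/4; 3/2; χ). -/
theorem stmt15 (χ : ℝ) (hχ : χ ∈ Set.Ioo (0 : ℝ) 1) :
    χ ^ (-(1/2) : ℝ) * Bint χ
      = 2 * (Real.Gamma (3/4)) ^ 2 / Real.sqrt Real.pi * hyp2F1 (-(1/2)) (3/4) (3/2) χ := by
  have hscale : χ ^ (-(1/2) : ℝ) * χ ^ (1 + -(1/4) + -(1/4) : ℝ) = 1 := by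
    rw [← rpow_add hχ.1]
    norm_num
  have heuler := integral_rpow_mul_one_sub_rpow_mul_one_sub_mul_rpow (a := -(1/2)) (b := 3/4)
    (c := 3/2) (z := χ) (by norm_num) (by norm_num) (by rw [abs_of_pos hχ.1]; exact hχ.2)
  have hΓ : Gamma (3/2) = √π / 2 := by
    rw [show (3/2 : ℝ) = 1/2 + 1 by norm_num, Gamma_add_one (by norm_num), Gamma_one_half_eq]
    ring
  norm_num at heuler
  rw [Bint, integral_rpow_mul_sub_one_add_rpow_mul_one_sub_rpow hχ.1, ← mul_assoc, hscale,
    one_mul, heuler, hΓ]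
  ring
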